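/- Separability criterion (Theorem 1): If ρ ∈ ℂ^{d_A d_B × d_A d_B} is a separable bipartite state, i.e., ρ = Σᵢ pᵢ ρ_A^i ⊗ ρ_B^i with pᵢ ≥ 0, Σᵢ pᵢ = 1, and each ρ_A^i, ρ_B^i a pure state, then for any real α, β and natural number l, ‖M_{α,β}^l(ρ)‖_tr ≤ √((lα²+1)(lβ²+1)). -/

import Mathlib

open Matrix
open scoped Kronecker ComplexOrder

/-- Column-stacking vectorization: `vec A (j, i) = A i j`. -/
def vec {m n : Type*} (A : Matrix m n ℂ) : n × m → ℂ := fun p => A p.2 p.1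

/-- The realignment map across the bipartition `A | B`. -/
def realign {A B : Type*} (ρ : Matrix (A × B) (A × B) ℂ) :
    Matrix (A × A) (B × B) ℂ :=
  Matrix.of fun r c => ρ (r.2, c.2) (r.1, c.1)

/-- Partial trace over the first tensor factor. -/
noncomputable def ptrA {A B : Type*} [Fintype A] (ρ : Matrix (A × B) (A × B) ℂ) :
    Matrix B B ℂ :=
  Matrix.of fun i j => ∑ k, ρ (k, i) (k, j)

/-- Partial trace over the second tensor factor. -/
noncomputable def ptrB {A B : Type*} [Fintype B] (ρ : Matrix (A × B) (A × B) ℂ) :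
    Matrix A A ℂ :=
  Matrix.of fun i j => ∑ k, ρ (i, k) (j, k)

/-- The trace norm `‖A‖_tr = tr √(Aᴴ A)`, i.e. the sum of singular values. -/
noncomputable def traceNorm {m n : Type*} [Fintype m] [Fintype n] [DecidableEq n]
    (A : Matrix m n ℂ) : ℝ :=
  (((Matrix.posSemidef_conjTranspose_mul_self A).1.eigenvectorUnitary *
    Matrix.diagonal (((↑) : ℝ → ℂ) ∘ (√·) ∘ (Matrix.posSemidef_conjTranspose_mul_self A).1.eigenvalues) *
    (star (Matrix.posSemidef_conjTranspose_mul_self A).1.eigenvectorUnitary : Matrix n n ℂ)).trace).re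

/-- The matrix `M_{α,β}^l(ρ) = [[αβ E_{l×l}, α ω_l(tr_A ρ)ᵀ],
[β ω_l(tr_B ρ), R(ρ)]]`. -/
noncomputable def Mblock (α β : ℝ) (l : ℕ) {A B : Type*} [Fintype A] [Fintype B]
    (ρ : Matrix (A × B) (A × B) ℂ) :
    Matrix (Fin l ⊕ A × A) (Fin l ⊕ B × B) ℂ :=
  Matrix.fromBlocks
    (Matrix.of fun _ _ => ((α * β : ℝ) : ℂ))
    (Matrix.of fun _ c => (α : ℂ) * _root_.vec (ptrA ρ) c)
    (Matrix.of fun r _ => (β : ℂ) * _root_.vec (ptrB ρ) r)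
    (realign ρ)

/-!
Write `ρ = ∑ pᵢ ρAᵢ ⊗ ρBᵢ`. Because `∑ pᵢ = 1` and every factor has unit trace, `M(ρ)` is the
combination `∑ pᵢ xᵢ yᵢᵀ` of rank-one matrices, with `xᵢ = (α, …, α, vec ρAᵢ)` and
`yᵢ = (β, …, β, vec ρBᵢ)`. For a Hermitian `X`, `tr (X X)` is the squared Frobenius norm, so purity
gives `‖xᵢ‖ = √(lα² + 1)` and `‖yᵢ‖ = √(lβ² + 1)`. It remains to see that
`‖∑ cᵢ xᵢ yᵢᵀ‖_tr ≤ ∑ |cᵢ| ‖xᵢ‖ ‖yᵢ‖`: in a singular value decomposition `M = ∑ σₖ uₖ vₖᴴ` one has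
`σₖ = ⟪uₖ, M vₖ⟫`, and Bessel's inequality for the orthonormal families `(uₖ)`, `(vₖ)` together
with Cauchy–Schwarz bounds `∑ₖ |⟪uₖ, x⟫ (yᵀ vₖ)|` by `‖x‖ ‖y‖`.
-/

open WithLp (toLp ofLp)
open scoped InnerProductSpace

section Bessel

variable {𝕜 E F κ : Type*} [RCLike 𝕜] [NormedAddCommGroup E] [InnerProductSpace 𝕜 E]
  [NormedAddCommGroup F] [InnerProductSpace 𝕜 F] [Fintype κ]

theorem Orthonormal.sum_norm_inner_mul_norm_inner_le {u : κ → E} {v : κ → F}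
    (hu : Orthonormal 𝕜 u) (hv : Orthonormal 𝕜 v) (x : E) (y : F) :
    ∑ k, ‖⟪u k, x⟫_𝕜‖ * ‖⟪v k, y⟫_𝕜‖ ≤ ‖x‖ * ‖y‖ :=
  calc ∑ k, ‖⟪u k, x⟫_𝕜‖ * ‖⟪v k, y⟫_𝕜‖
      ≤ √(∑ k, ‖⟪u k, x⟫_𝕜‖ ^ 2) * √(∑ k, ‖⟪v k, y⟫_𝕜‖ ^ 2) :=
        Real.sum_mul_le_sqrt_mul_sqrt _ _ _
    _ ≤ √(‖x‖ ^ 2) * √(‖y‖ ^ 2) := by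
        gcongr
        exacts [hu.sum_inner_products_le x, hv.sum_inner_products_le y]
    _ = ‖x‖ * ‖y‖ := by rw [Real.sqrt_sq (norm_nonneg x), Real.sqrt_sq (norm_nonneg y)]

end Bessel

section TraceNorm

variable {m n : Type*} [Fintype m] [Fintype n]

theorem inner_toLp_vecMulVec_mulVec (u x : EuclideanSpace ℂ m) (y w : n → ℂ) :
    ⟪u, toLp 2 (vecMulVec (ofLp x) y *ᵥ w)⟫_ℂ = ⟪u, x⟫_ℂ * (y ⬝ᵥ w) := by
  rw [vecMulVec_mulVec, op_smul_eq_smul, WithLp.toLp_smul, WithLp.toLp_ofLp, inner_smul_right,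
    mul_comm]

theorem ofReal_sum_norm_sq_vec (X : Matrix m n ℂ) :
    ((∑ p, ‖_root_.vec X p‖ ^ 2 : ℝ) : ℂ) = (Xᴴ * X).trace := by
  rw [← star_vec_dotProduct_vec]
  push_cast
  simp [dotProduct, Complex.conj_mul', _root_.vec]

variable [DecidableEq n]

theorem traceNorm_eq_sum_sqrt_eigenvalues (A : Matrix m n ℂ) :
    traceNorm A = ∑ k, √((posSemidef_conjTranspose_mul_self A).1.eigenvalues k) := by
  rw [traceNorm, trace_mul_cycle, Unitary.coe_star_mul_self, one_mul, trace_diagonal,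
    Complex.re_sum]
  rfl

theorem inner_mulVec_eigenvectorBasis (A : Matrix m n ℂ) (hH : (Aᴴ * A).IsHermitian) (j k : n) :
    ⟪toLp 2 (A *ᵥ hH.eigenvectorBasis j), toLp 2 (A *ᵥ hH.eigenvectorBasis k)⟫_ℂ =
      if j = k then (hH.eigenvalues k : ℂ) else 0 := by
  have hW := orthonormal_iff_ite.mp hH.eigenvectorBasis.orthonormal j k
  rw [EuclideanSpace.inner_toLp_toLp, dotProduct_comm, star_mulVec, ← dotProduct_mulVec,
    mulVec_mulVec, hH.mulVec_eigenvectorBasis, dotProduct_smul, dotProduct_comm,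
    ← EuclideanSpace.inner_eq_star_dotProduct, hW, smul_ite, smul_zero, Complex.real_smul,
    mul_one]

theorem exists_orthonormal_traceNorm_eq_sum_inner (A : Matrix m n ℂ) :
    ∃ (s : Finset n) (u : s → EuclideanSpace ℂ m) (v : s → EuclideanSpace ℂ n),
      Orthonormal ℂ u ∧ Orthonormal ℂ v ∧
        (traceNorm A : ℂ) = ∑ k, ⟪u k, toLp 2 (A *ᵥ ofLp (v k))⟫_ℂ := by
  have hpsd := posSemidef_conjTranspose_mul_self A
  set hH := hpsd.1
  set σ : n → ℝ := fun k => √(hH.eigenvalues k)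
  have hσ_sq : ∀ k, (σ k : ℂ) ^ 2 = hH.eigenvalues k := fun k => by
    rw [← Complex.ofReal_pow, Real.sq_sqrt (hpsd.eigenvalues_nonneg k)]
  set s := Finset.univ.filter fun k => σ k ≠ 0
  have hσ_ne : ∀ k : s, (σ k : ℂ) ≠ 0 := fun k => by
    exact_mod_cast (Finset.mem_filter.mp k.2).2
  refine ⟨s, fun k => (σ k : ℂ)⁻¹ • toLp 2 (A *ᵥ hH.eigenvectorBasis k),
    fun k => hH.eigenvectorBasis k, ?_,
    hH.eigenvectorBasis.orthonormal.comp _ Subtype.val_injective, ?_⟩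
  · rw [orthonormal_iff_ite]
    intro j k
    rw [inner_smul_left, inner_smul_right, inner_mulVec_eigenvectorBasis, Complex.conj_inv,
      Complex.conj_ofReal]
    by_cases hjk : j = k
    · subst hjk
      rw [if_pos rfl, if_pos rfl, ← hσ_sq, ← mul_assoc, ← mul_inv, ← sq, inv_mul_cancel₀]
      exact pow_ne_zero 2 (hσ_ne j)
    · rw [if_neg (Subtype.coe_ne_coe.mpr hjk), if_neg hjk, mul_zero, mul_zero]
  · simp only [inner_smul_left, inner_mulVec_eigenvectorBasis, ↓reduceIte, Complex.conj_inv,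
      Complex.conj_ofReal, ← hσ_sq]
    rw [traceNorm_eq_sum_sqrt_eigenvalues, ← Finset.sum_filter_ne_zero, ← Finset.sum_coe_sort,
      Complex.ofReal_sum]
    refine Finset.sum_congr rfl fun k _ => ?_
    change (σ k : ℂ) = _
    rw [sq, ← mul_assoc, inv_mul_cancel₀ (hσ_ne k), one_mul]

theorem traceNorm_le_of_eq_sum_vecMulVec {ι : Type*} [Fintype ι] {A : Matrix m n ℂ}
    (c : ι → ℝ) (x : ι → EuclideanSpace ℂ m) (y : ι → EuclideanSpace ℂ n)
    (hA : A = ∑ i, c i • vecMulVec (ofLp (x i)) (ofLp (y i))) :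
    traceNorm A ≤ ∑ i, |c i| * (‖x i‖ * ‖y i‖) := by
  obtain ⟨s, u, v, hu, hv, htr⟩ := exists_orthonormal_traceNorm_eq_sum_inner A
  set ys : ι → EuclideanSpace ℂ n := fun i => toLp 2 (star (ofLp (y i)))
  have hys : ∀ i, ‖ys i‖ = ‖y i‖ := fun i => by simp [ys, EuclideanSpace.norm_eq]
  have hexpand : ∀ k, ⟪u k, toLp 2 (A *ᵥ ofLp (v k))⟫_ℂ =
      ∑ i, (c i : ℂ) * (⟪u k, x i⟫_ℂ * ⟪ys i, v k⟫_ℂ) := fun k => by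
    simp only [hA, sum_mulVec, smul_mulVec, WithLp.toLp_sum, WithLp.toLp_smul, inner_sum,
      ← Complex.coe_smul, inner_smul_right, inner_toLp_vecMulVec_mulVec]
    refine Finset.sum_congr rfl fun i _ => ?_
    rw [EuclideanSpace.inner_eq_star_dotProduct (ys i), WithLp.ofLp_toLp, star_star,
      dotProduct_comm (ofLp (v k))]
  calc traceNorm A = (∑ k, ⟪u k, toLp 2 (A *ᵥ ofLp (v k))⟫_ℂ).re := by
        rw [← htr, Complex.ofReal_re]
    _ ≤ ∑ k, ∑ i, |c i| * (‖⟪u k, x i⟫_ℂ‖ * ‖⟪v k, ys i⟫_ℂ‖) := by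
        refine (Complex.re_le_norm _).trans <| (norm_sum_le _ _).trans <|
          Finset.sum_le_sum fun k _ => ?_
        rw [hexpand]
        refine (norm_sum_le _ _).trans_eq <| Finset.sum_congr rfl fun i _ => ?_
        rw [norm_mul, norm_mul, Complex.norm_real, Real.norm_eq_abs, norm_inner_symm (ys i)]
    _ = ∑ i, |c i| * ∑ k, ‖⟪u k, x i⟫_ℂ‖ * ‖⟪v k, ys i⟫_ℂ‖ := by
        rw [Finset.sum_comm]
        simp only [Finset.mul_sum]
    _ ≤ ∑ i, |c i| * (‖x i‖ * ‖y i‖) := by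
        gcongr with i
        rw [← hys]
        exact hu.sum_norm_inner_mul_norm_inner_le hv _ _

end TraceNorm

section Mblock

variable {A B : Type*} [Fintype A] [Fintype B]

def augmentedVec (l : ℕ) (a : ℝ) (X : Matrix A A ℂ) : EuclideanSpace ℂ (Fin l ⊕ A × A) :=
  toLp 2 (Sum.elim (fun _ => (a : ℂ)) (_root_.vec X))

theorem Mblock_sum_smul {ι : Type*} [Fintype ι] {w : ι → ℝ} (hw : ∑ i, w i = 1)
    (α β : ℝ) (l : ℕ) (ρ : ι → Matrix (A × B) (A × B) ℂ) :
    Mblock α β l (∑ i, w i • ρ i) = ∑ i, w i • Mblock α β l (ρ i) := by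
  ext (r | r) (c | c) <;>
    simp only [Mblock, fromBlocks_apply₁₁, fromBlocks_apply₁₂, fromBlocks_apply₂₁,
      fromBlocks_apply₂₂, of_apply, ptrA, ptrB, realign, _root_.vec, Matrix.sum_apply,
      Matrix.smul_apply, Complex.real_smul, Finset.mul_sum]
  · rw [← Finset.sum_mul, ← Complex.ofReal_sum, hw, Complex.ofReal_one, one_mul]
  all_goals rw [Finset.sum_comm]; simp only [mul_left_comm]

theorem Mblock_kronecker {X : Matrix A A ℂ} {Y : Matrix B B ℂ} (hX : X.trace = 1)
    (hY : Y.trace = 1) (α β : ℝ) (l : ℕ) :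
    Mblock α β l (X ⊗ₖ Y) = vecMulVec (ofLp (augmentedVec l α X)) (ofLp (augmentedVec l β Y)) := by
  simp only [trace, diag] at hX hY
  ext (r | r) (c | c) <;>
    simp [Mblock, augmentedVec, vecMulVec, ptrA, ptrB, realign, _root_.vec, ← Finset.sum_mul,
      ← Finset.mul_sum, hX, hY, mul_comm]

theorem norm_augmentedVec_of_pure {X : Matrix A A ℂ} (hX : X.IsHermitian)
    (hX2 : (X * X).trace = 1) (l : ℕ) (a : ℝ) : ‖augmentedVec l a X‖ = √(l * a ^ 2 + 1) := by
  rw [← Real.sqrt_sq (norm_nonneg _), EuclideanSpace.norm_sq_eq, Fintype.sum_sum_type]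
  have hvec : ∑ p, ‖_root_.vec X p‖ ^ 2 = 1 := by
    rw [← Complex.ofReal_inj, ofReal_sum_norm_sq_vec, hX.eq, hX2, Complex.ofReal_one]
  simp [augmentedVec, hvec]

end Mblock

/-- Theorem 1 (separability criterion): if `ρ` is separable then
`‖M_{α,β}^l(ρ)‖_tr ≤ √((lα²+1)(lβ²+1))`. -/
theorem separable_traceNorm_Mblock_le {dA dB N : ℕ}
    (p : Fin N → ℝ) (ρA : Fin N → Matrix (Fin dA) (Fin dA) ℂ)
    (ρB : Fin N → Matrix (Fin dB) (Fin dB) ℂ)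
    (hp : ∀ i, 0 ≤ p i) (hp1 : ∑ i, p i = 1)
    (hApsd : ∀ i, (ρA i).PosSemidef) (hBpsd : ∀ i, (ρB i).PosSemidef)
    (hA1 : ∀ i, (ρA i).trace = 1) (hB1 : ∀ i, (ρB i).trace = 1)
    (hA2 : ∀ i, (ρA i * ρA i).trace = 1) (hB2 : ∀ i, (ρB i * ρB i).trace = 1)
    (ρ : Matrix (Fin dA × Fin dB) (Fin dA × Fin dB) ℂ)
    (hρ : ρ = ∑ i, p i • (ρA i ⊗ₖ ρB i))
    (α β : ℝ) (l : ℕ) :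
    traceNorm (Mblock α β l ρ) ≤
      Real.sqrt ((l * α ^ 2 + 1) * (l * β ^ 2 + 1)) := by
  have hM : Mblock α β l ρ = ∑ i, p i •
      vecMulVec (ofLp (augmentedVec l α (ρA i))) (ofLp (augmentedVec l β (ρB i))) := by
    simp only [hρ, Mblock_sum_smul hp1, Mblock_kronecker (hA1 _) (hB1 _)]
  calc traceNorm (Mblock α β l ρ)
      ≤ ∑ i, |p i| * (‖augmentedVec l α (ρA i)‖ * ‖augmentedVec l β (ρB i)‖) :=
        traceNorm_le_of_eq_sum_vecMulVec _ _ _ hM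
    _ = ∑ i, p i * √((l * α ^ 2 + 1) * (l * β ^ 2 + 1)) := by
        refine Finset.sum_congr rfl fun i _ => ?_
        rw [abs_of_nonneg (hp i), norm_augmentedVec_of_pure (hApsd i).1 (hA2 i),
          norm_augmentedVec_of_pure (hBpsd i).1 (hB2 i), ← Real.sqrt_mul (by positivity)]
    _ = √((l * α ^ 2 + 1) * (l * β ^ 2 + 1)) := by rw [← Finset.sum_mul, hp1, one_mul]
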